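/- arXiv:1008.3241 — 3 statements merged into one kernel-verified Lean document; each statement's English description precedes it below -/
import Mathlib

section
/- If a semigroup S is a left I-order in a bisimple inverse ω-semigroup Q whose idempotents are e_0 > e_1 > e_2 > ⋯, then for every n ∈ ℕ there exists an element s ∈ S with s 𝓛 e_n in Q (i.e., S intersects every 𝓛-class of Q). -/
/-- Green's relation `𝓡`. -/
def GreenR {Q : Type*} [Mul Q] (a b : Q) : Prop :=
  a = b ∨ ∃ x y : Q, a * x = b ∧ b * y = a

/-- Green's relation `𝓛`. -/
def GreenL {Q : Type*} [Mul Q] (a b : Q) : Prop :=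
  a = b ∨ ∃ x y : Q, x * a = b ∧ y * b = a

/-- Green's relation `𝓓`. -/
def GreenD {Q : Type*} [Mul Q] (a b : Q) : Prop :=
  ∃ c : Q, GreenR a c ∧ GreenL c b

/-- `Q` is an inverse semigroup with inverse map `inv`: every `q` has `inv q` as its
unique (semigroup-theoretic) inverse. -/
def IsInverseSg (Q : Type*) [Mul Q] (inv : Q → Q) : Prop :=
  ∀ q : Q, (q * inv q * q = q ∧ inv q * q * inv q = inv q) ∧
    ∀ x : Q, q * x * q = q → x * q * x = x → x = inv q

/-- `Q` is bisimple: any two elements are `𝓓`-related. -/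
def IsBisimple (Q : Type*) [Mul Q] : Prop := ∀ a b : Q, GreenD a b

/-- The idempotents of `Q` are exactly `e 0 > e 1 > e 2 > ⋯`, an ω-chain
(ordering `e ≤ f ↔ e * f = f * e = e`). -/
def IsOmegaChain (Q : Type*) [Mul Q] (e : ℕ → Q) : Prop :=
  (∀ n, e n * e n = e n) ∧
  (∀ q : Q, q * q = q → ∃ n, q = e n) ∧
  (∀ n, e (n + 1) * e n = e (n + 1) ∧ e n * e (n + 1) = e (n + 1)) ∧
  Function.Injective e

/-- `T` is a left I-order in `Q` (with inverse map `inv`): every element of `Q` is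
of the form `inv a * b` with `a, b ∈ T`. -/
def IsLeftIOrder {Q : Type*} [Mul Q] (inv : Q → Q) (T : Set Q) : Prop :=
  ∀ q : Q, ∃ a ∈ T, ∃ b ∈ T, q = inv a * b

/-!
Write `e n = a⁻¹ b` with `a, b ∈ S`. Since `e n` is idempotent it is its own inverse, so also
`e n = b⁻¹ a`, and `e n = e n * e n = a⁻¹ (a a⁻¹)(b b⁻¹) a`. The idempotents `a a⁻¹` and `b b⁻¹`
lie on a chain; if `a a⁻¹ ≤ b b⁻¹` this collapses to `e n = a⁻¹ a`, which is `𝓛`-related to `a`,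
and symmetrically `e n = b⁻¹ b` otherwise.
-/

namespace IsInverseSg

variable {Q : Type*} [Semigroup Q] {inv : Q → Q}

theorem mul_inv_mul (hinv : IsInverseSg Q inv) (q : Q) : q * inv q * q = q :=
  (hinv q).1.1

theorem inv_mul_inv (hinv : IsInverseSg Q inv) (q : Q) : inv q * q * inv q = inv q :=
  (hinv q).1.2

theorem eq_inv (hinv : IsInverseSg Q inv) {q x : Q} (h₁ : q * x * q = q)
    (h₂ : x * q * x = x) : x = inv q :=
  (hinv q).2 x h₁ h₂

theorem inv_inv (hinv : IsInverseSg Q inv) (q : Q) : inv (inv q) = q :=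
  (hinv.eq_inv (hinv.inv_mul_inv q) (hinv.mul_inv_mul q)).symm

theorem inv_eq_self (hinv : IsInverseSg Q inv) {p : Q} (hp : IsIdempotentElem p) :
    inv p = p :=
  (hinv.eq_inv (by rw [hp.eq, hp.eq]) (by rw [hp.eq, hp.eq])).symm

theorem isIdempotentElem_mul_inv (hinv : IsInverseSg Q inv) (q : Q) :
    IsIdempotentElem (q * inv q) := by
  rw [IsIdempotentElem, ← mul_assoc, hinv.mul_inv_mul]

theorem isIdempotentElem_inv_mul (hinv : IsInverseSg Q inv) (q : Q) :
    IsIdempotentElem (inv q * q) := by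
  rw [IsIdempotentElem, ← mul_assoc, hinv.inv_mul_inv]

theorem isIdempotentElem_mul (hinv : IsInverseSg Q inv) {e f : Q} (he : IsIdempotentElem e)
    (hf : IsIdempotentElem f) : IsIdempotentElem (e * f) := by
  have he' : ∀ a, a * e * e = a * e := fun a ↦ by rw [mul_assoc, he.eq]
  have hf' : ∀ a, a * f * f = a * f := fun a ↦ by rw [mul_assoc, hf.eq]
  -- `f (ef)⁻¹ e` is an inverse of `e f`, and this forces `(ef)⁻¹` to be idempotent.
  have hfxe : f * inv (e * f) * e = inv (e * f) := by
    refine hinv.eq_inv ?_ ?_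
    · calc e * f * (f * inv (e * f) * e) * (e * f) = e * f * inv (e * f) * (e * f) := by
            simp only [← mul_assoc, he', hf']
        _ = e * f := hinv.mul_inv_mul _
    · calc f * inv (e * f) * e * (e * f) * (f * inv (e * f) * e)
          = f * (inv (e * f) * (e * f) * inv (e * f)) * e := by
            simp only [← mul_assoc, he', hf']
        _ = f * inv (e * f) * e := by rw [hinv.inv_mul_inv]
  have hx : IsIdempotentElem (inv (e * f)) :=
    calc inv (e * f) * inv (e * f) = f * inv (e * f) * e * (f * inv (e * f) * e) := by
          rw [hfxe]
      _ = f * (inv (e * f) * (e * f) * inv (e * f)) * e := by simp only [← mul_assoc]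
      _ = inv (e * f) := by rw [hinv.inv_mul_inv, hfxe]
  rw [← hinv.inv_inv (e * f), hinv.inv_eq_self hx]
  exact hx

theorem idempotent_comm (hinv : IsInverseSg Q inv) {e f : Q} (he : IsIdempotentElem e)
    (hf : IsIdempotentElem f) : e * f = f * e := by
  have hef := hinv.isIdempotentElem_mul he hf
  have hfe := hinv.isIdempotentElem_mul hf he
  have he' : ∀ a, a * e * e = a * e := fun a ↦ by rw [mul_assoc, he.eq]
  have hf' : ∀ a, a * f * f = a * f := fun a ↦ by rw [mul_assoc, hf.eq]
  have key : f * e = inv (e * f) := by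
    refine hinv.eq_inv ?_ ?_
    · simp only [← mul_assoc, he', hf']
      simpa only [← mul_assoc] using hef.eq
    · simp only [← mul_assoc, he', hf']
      simpa only [← mul_assoc] using hfe.eq
  rw [key, hinv.inv_eq_self hef]

theorem inv_mul (hinv : IsInverseSg Q inv) (x y : Q) : inv (x * y) = inv y * inv x := by
  have comm : y * inv y * (inv x * x) = inv x * x * (y * inv y) :=
    hinv.idempotent_comm (hinv.isIdempotentElem_mul_inv y) (hinv.isIdempotentElem_inv_mul x)
  symm
  apply hinv.eq_inv
  · calc x * y * (inv y * inv x) * (x * y)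
        = x * (y * inv y * (inv x * x)) * y := by simp only [mul_assoc]
      _ = x * inv x * x * (y * inv y * y) := by rw [comm]; simp only [mul_assoc]
      _ = x * y := by rw [hinv.mul_inv_mul, hinv.mul_inv_mul]
  · calc inv y * inv x * (x * y) * (inv y * inv x)
        = inv y * (inv x * x * (y * inv y)) * inv x := by simp only [mul_assoc]
      _ = inv y * y * inv y * (inv x * x * inv x) := by rw [← comm]; simp only [mul_assoc]
      _ = inv y * inv x := by rw [hinv.inv_mul_inv, hinv.inv_mul_inv]

theorem greenL_inv_mul_self (hinv : IsInverseSg Q inv) (a : Q) : GreenL a (inv a * a) :=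
  Or.inr ⟨inv a, a, rfl, by rw [← mul_assoc, hinv.mul_inv_mul]⟩

theorem eq_inv_mul_self_of_mul_inv_le (hinv : IsInverseSg Q inv) {a b f : Q}
    (hf : IsIdempotentElem f) (hab : f = inv a * b) (hba : f = inv b * a)
    (hle : a * inv a * (b * inv b) = a * inv a) : f = inv a * a :=
  calc f = inv a * b * (inv b * a) := by rw [← hab, ← hba, hf.eq]
    _ = inv a * (a * inv a * (b * inv b)) * a := by
        conv_lhs => rw [← hinv.inv_mul_inv a]
        simp only [mul_assoc]
    _ = inv a * a := by rw [hle]; simp only [← mul_assoc]; rw [hinv.inv_mul_inv]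

end IsInverseSg

namespace IsOmegaChain

variable {Q : Type*} [Semigroup Q] {e : ℕ → Q}

theorem mul_eq_left_of_le (hchain : IsOmegaChain Q e) {i j : ℕ} (hij : i ≤ j) :
    e j * e i = e j := by
  induction j, hij using Nat.le_induction with
  | base => exact hchain.1 i
  | succ k _ ih => rw [← (hchain.2.2.1 k).1, mul_assoc, ih]

theorem idempotent_total (hchain : IsOmegaChain Q e) {p q : Q} (hp : IsIdempotentElem p)
    (hq : IsIdempotentElem q) : p * q = p ∨ q * p = q := by
  obtain ⟨i, rfl⟩ := hchain.2.1 p hp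
  obtain ⟨j, rfl⟩ := hchain.2.1 q hq
  exact (le_total j i).imp hchain.mul_eq_left_of_le hchain.mul_eq_left_of_le

end IsOmegaChain

theorem stmt0_general {Q : Type*} [Semigroup Q] (inv : Q → Q) (e : ℕ → Q)
    (hinv : IsInverseSg Q inv) (hchain : IsOmegaChain Q e)
    (S : Subsemigroup Q) (hS : IsLeftIOrder inv (S : Set Q)) :
    ∀ n : ℕ, ∃ s ∈ S, GreenL (s : Q) (e n) := by
  intro n
  obtain ⟨a, ha, b, hb, hab⟩ := hS (e n)
  have hen : IsIdempotentElem (e n) := hchain.1 n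
  have hba : e n = inv b * a := by
    rw [← hinv.inv_eq_self hen, hab, hinv.inv_mul, hinv.inv_inv]
  rcases hchain.idempotent_total (hinv.isIdempotentElem_mul_inv a)
      (hinv.isIdempotentElem_mul_inv b) with hle | hle
  · refine ⟨a, ha, ?_⟩
    rw [hinv.eq_inv_mul_self_of_mul_inv_le hen hab hba hle]
    exact hinv.greenL_inv_mul_self a
  · refine ⟨b, hb, ?_⟩
    rw [hinv.eq_inv_mul_self_of_mul_inv_le hen hba hab hle]
    exact hinv.greenL_inv_mul_self b

/-- A left I-order in a bisimple inverse ω-semigroup meets every `𝓛`-class. -/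
theorem stmt0 {Q : Type*} [Semigroup Q] (inv : Q → Q) (e : ℕ → Q)
    (hinv : IsInverseSg Q inv) (hbis : IsBisimple Q) (hchain : IsOmegaChain Q e)
    (S : Subsemigroup Q) (hS : IsLeftIOrder inv (S : Set Q)) :
    ∀ n : ℕ, ∃ s ∈ S, GreenL (s : Q) (e n) :=
  stmt0_general inv e hinv hchain S hS
end

section
/- Let S be a semigroup satisfying conditions (A), (B), (C). Then the relation ~ on Σ = {(a,b) ∈ S × S : r(a) = r(b)}, defined by (a,b) ~ (c,d) iff there exist x, y ∈ S with xa = yc, xb = yd, l(x) = r(a), l(y) = r(c) and r(x) = r(y), is an equivalence relation on Σ. -/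
/-- The bicyclic semigroup `𝓑` carried by `ℕ × ℕ`, an element being `(r, l)`;
`(m,n)(p,q) = (m - n + t, q - p + t)` with `t = max n p`. -/
structure Bicyclic where
  r : ℕ
  l : ℕ

instance : Mul Bicyclic :=
  ⟨fun x y => ⟨x.r + (max x.l y.r - x.l), y.l + (max x.l y.r - y.r)⟩⟩

/-- The inverse `(m,n)⁻¹ = (n,m)` in the bicyclic semigroup. -/
def Bicyclic.inv (x : Bicyclic) : Bicyclic := ⟨x.l, x.r⟩

/-- `T` is a left I-order in the bicyclic semigroup `𝓑`. -/
def IsLeftIOrderBic (T : Set Bicyclic) : Prop :=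
  ∀ q : Bicyclic, ∃ a ∈ T, ∃ b ∈ T, q = a.inv * b

/-- `r a`, the first coordinate of `φ a` in `𝓑`. -/
def rr {S : Type*} [Mul S] (φ : S →ₙ* Bicyclic) (a : S) : ℕ := (φ a).r

/-- `l a`, the second coordinate of `φ a` in `𝓑`. -/
def ll {S : Type*} [Mul S] (φ : S →ₙ* Bicyclic) (a : S) : ℕ := (φ a).l

/-- Condition (A): the image of `φ` is a left I-order in `𝓑`. -/
def CondA {S : Type*} [Mul S] (φ : S →ₙ* Bicyclic) : Prop :=
  IsLeftIOrderBic (Set.range (⇑φ))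

/-- Condition (B)(i): if `l x, l y ≥ r a` and `x * a = y * a` then `x = y`. -/
def CondBi {S : Type*} [Mul S] (φ : S →ₙ* Bicyclic) : Prop :=
  ∀ x y a : S, rr φ a ≤ ll φ x → rr φ a ≤ ll φ y → x * a = y * a → x = y

/-- Condition (B)(ii): if `r x, r y ≥ l a` and `a * x = a * y` then `x = y`. -/
def CondBii {S : Type*} [Mul S] (φ : S →ₙ* Bicyclic) : Prop :=
  ∀ x y a : S, ll φ a ≤ rr φ x → ll φ a ≤ rr φ y → a * x = a * y → x = y

/-- Condition (C): for all `b c` there are `x y` with `x * b = y * c`,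
`r x = r y`, `l x = r b - l b + max (l b) (l c)` and
`l y = r c - l c + max (l b) (l c)`. -/
def CondC {S : Type*} [Mul S] (φ : S →ₙ* Bicyclic) : Prop :=
  ∀ b c : S, ∃ x y : S, x * b = y * c ∧ rr φ x = rr φ y ∧
    ll φ x = rr φ b + (max (ll φ b) (ll φ c) - ll φ b) ∧
    ll φ y = rr φ c + (max (ll φ b) (ll φ c) - ll φ c)

/-- `Σ = {(a,b) ∈ S × S : r a = r b}`. -/
abbrev Sig {S : Type*} [Mul S] (φ : S →ₙ* Bicyclic) : Type _ :=
  {p : S × S // rr φ p.1 = rr φ p.2}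

/-- The relation `∼` on pairs: `(a,b) ∼ (c,d)` iff there are `x y` with
`x * a = y * c`, `x * b = y * d`, `l x = r a`, `l y = r c`, `r x = r y`. -/
def simP {S : Type*} [Mul S] (φ : S →ₙ* Bicyclic) (p q : S × S) : Prop :=
  ∃ x y : S, x * p.1 = y * q.1 ∧ x * p.2 = y * q.2 ∧
    ll φ x = rr φ p.1 ∧ ll φ y = rr φ q.1 ∧ rr φ x = rr φ y

/-- The relation `∼` on `Σ`. -/
def sim {S : Type*} [Mul S] (φ : S →ₙ* Bicyclic) (p q : Sig φ) : Prop :=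
  simP φ p.1 q.1

/-!
Reflexivity: (C) applied to `(a, a)` gives `x a = y a` with `l x = l y = r a`, and (B)(i)
forces `x = y`. Transitivity: if `(x, y)` witnesses `(a,b) ∼ (c,d)` and `(u, v)` witnesses
`(c,d) ∼ (e,f)`, then `l y = r c = l u`, so (C) gives `s y = t u` with `l s = r y`, `l t = r u`,
`r s = r t`, and `(s x, t v)` witnesses `(a,b) ∼ (e,f)`. All the degree conditions follow from
the rule `(m,n)(n,q) = (m,q)` in `𝓑`.
-/

section

variable {S : Type*}

lemma rr_mul [Mul S] (φ : S →ₙ* Bicyclic) (a b : S) :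
    rr φ (a * b) = rr φ a + (max (ll φ a) (rr φ b) - ll φ a) := by
  unfold rr ll; rw [map_mul]; rfl

lemma ll_mul [Mul S] (φ : S →ₙ* Bicyclic) (a b : S) :
    ll φ (a * b) = ll φ b + (max (ll φ a) (rr φ b) - rr φ b) := by
  unfold rr ll; rw [map_mul]; rfl

lemma rr_mul_of_rr_le_ll [Mul S] (φ : S →ₙ* Bicyclic) {a b : S} (h : rr φ b ≤ ll φ a) :
    rr φ (a * b) = rr φ a := by
  rw [rr_mul, max_eq_left h, Nat.sub_self, add_zero]

lemma ll_mul_of_ll_eq_rr [Mul S] (φ : S →ₙ* Bicyclic) {a b : S} (h : ll φ a = rr φ b) :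
    ll φ (a * b) = ll φ b := by
  rw [ll_mul, h, max_self, Nat.sub_self, add_zero]

lemma CondC.exists_of_ll_eq [Mul S] {φ : S →ₙ* Bicyclic} (hC : CondC φ) {b c : S}
    (h : ll φ b = ll φ c) :
    ∃ x y : S, x * b = y * c ∧ rr φ x = rr φ y ∧ ll φ x = rr φ b ∧ ll φ y = rr φ c := by
  obtain ⟨x, y, hxy, hr, hlx, hly⟩ := hC b c
  rw [h, max_self, Nat.sub_self, add_zero] at hlx hly
  exact ⟨x, y, hxy, hr, hlx, hly⟩

lemma simP_refl [Mul S] {φ : S →ₙ* Bicyclic} (hBi : CondBi φ) (hC : CondC φ) (p : S × S) :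
    simP φ p p := by
  obtain ⟨x, y, hxy, -, hlx, hly⟩ := hC.exists_of_ll_eq (b := p.1) rfl
  obtain rfl : x = y := hBi x y p.1 hlx.ge hly.ge hxy
  exact ⟨x, x, rfl, rfl, hlx, hlx, rfl⟩

lemma simP_symm [Mul S] {φ : S →ₙ* Bicyclic} {p q : S × S} (h : simP φ p q) : simP φ q p := by
  obtain ⟨x, y, h₁, h₂, hlx, hly, hr⟩ := h
  exact ⟨y, x, h₁.symm, h₂.symm, hly, hlx, hr.symm⟩

lemma simP_trans [Semigroup S] {φ : S →ₙ* Bicyclic} (hC : CondC φ) {p q w : S × S}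
    (hpq : simP φ p q) (hqw : simP φ q w) : simP φ p w := by
  obtain ⟨x, y, hx₁, hx₂, hlx, hly, hrxy⟩ := hpq
  obtain ⟨u, v, hu₁, hu₂, hlu, hlv, hruv⟩ := hqw
  obtain ⟨s, t, hst, hrst, hls, hlt⟩ := hC.exists_of_ll_eq (hly.trans hlu.symm)
  refine ⟨s * x, t * v, ?_, ?_, ?_, ?_, ?_⟩
  · rw [mul_assoc, hx₁, ← mul_assoc, hst, mul_assoc, hu₁, ← mul_assoc]
  · rw [mul_assoc, hx₂, ← mul_assoc, hst, mul_assoc, hu₂, ← mul_assoc]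
  · rw [ll_mul_of_ll_eq_rr φ (hls.trans hrxy.symm), hlx]
  · rw [ll_mul_of_ll_eq_rr φ (hlt.trans hruv), hlv]
  · rw [rr_mul_of_rr_le_ll φ (hls.trans hrxy.symm).ge, rr_mul_of_rr_le_ll φ (hlt.trans hruv).ge, hrst]

end

theorem stmt7_general {S : Type*} [Semigroup S] (φ : S →ₙ* Bicyclic)
    (hBi : CondBi φ) (hC : CondC φ) :
    Equivalence (sim φ) :=
  ⟨fun p => simP_refl hBi hC p.1, simP_symm, simP_trans hC⟩

/-- The relation `∼` is an equivalence on `Σ`. -/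
theorem stmt7 {S : Type*} [Semigroup S] (φ : S →ₙ* Bicyclic)
    (hA : CondA φ) (hBi : CondBi φ) (hBii : CondBii φ) (hC : CondC φ) :
    Equivalence (sim φ) :=
  stmt7_general φ hBi hC
end

section
/- Let S be a semigroup satisfying conditions (A), (B), (C), and let a, b, c, d, e ∈ S. If abc = dec, l(b) ≥ r(c) and l(e) ≥ r(c), then ab = de. -/
theorem Bicyclic.l_le_l_mul (x y : Bicyclic) : y.l ≤ (x * y).l :=
  Nat.le_add_right _ _

theorem ll_le_ll_mul {S : Type*} [Mul S] (φ : S →ₙ* Bicyclic) (x y : S) :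
    ll φ y ≤ ll φ (x * y) := by
  simpa only [ll, map_mul] using Bicyclic.l_le_l_mul (φ x) (φ y)

theorem stmt10_general {S : Type*} [Semigroup S] (φ : S →ₙ* Bicyclic)
    (hBi : CondBi φ)
    (a b c d e : S) (h : a * b * c = d * e * c)
    (hb : rr φ c ≤ ll φ b) (he : rr φ c ≤ ll φ e) :
    a * b = d * e :=
  hBi (a * b) (d * e) c (hb.trans (ll_le_ll_mul φ a b)) (he.trans (ll_le_ll_mul φ d e)) h

/-- If `a*b*c = d*e*c`, `l b ≥ r c` and `l e ≥ r c`, then `a*b = d*e`. -/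
theorem stmt10 {S : Type*} [Semigroup S] (φ : S →ₙ* Bicyclic)
    (hA : CondA φ) (hBi : CondBi φ) (hBii : CondBii φ) (hC : CondC φ)
    (a b c d e : S) (h : a * b * c = d * e * c)
    (hb : rr φ c ≤ ll φ b) (he : rr φ c ≤ ll φ e) :
    a * b = d * e :=
  stmt10_general φ hBi a b c d e h hb he
end
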